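/- Let g ≥ 2 and let τ ∈ ℍ_g be written in block form τ = [[t, zᵀ],[z, Z]] with t ∈ ℂ, z ∈ ℂ^{g−1} and Z a symmetric (g−1)×(g−1) matrix (then Z ∈ ℍ_{g−1}). Then for all x ∈ ℂ, b ∈ ℂ^{g−1}, δ₁ ∈ {0,1} and ε, δ ∈ {0,1}^{g−1}: θ[(0,ε);(δ₁,δ)](τ, (x,b)) = Σ_{N ∈ ℤ} exp(πi N² t + 2πi N x) · (−1)^{N δ₁} · θ[ε;δ](Z, b + N z), the series on the right being absolutely convergent. -/

import Mathlib

/-!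
Write the summation index of the genus-`(n+1)` series as `(m, M) ∈ ℤ × ℤⁿ`. Because the first
characteristic entry is `0` and `τ` is symmetric, the exponent of the `(m, M)` term is
`πi m² t + 2πi m x + πi m δ₁` plus the exponent of the genus-`n` term at `M` with `b` shifted by
`m z`. The series converges absolutely: `Im τ ≥ c · 1` with `c > 0` bounds every term by a
product of one-variable Gaussians, and absolute convergence allows summing over `M` first.
-/

open Complex Matrix

/-- The genus-`g` theta function with characteristic `[ε; δ]`. -/
noncomputable def theta (g : ℕ) (ε δ : Fin g → ℤ) (τ : Matrix (Fin g) (Fin g) ℂ)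
    (z : Fin g → ℂ) : ℂ :=
  ∑' N : Fin g → ℤ,
    Complex.exp (↑Real.pi * I *
        (∑ j, ∑ k, ((N j : ℂ) + (ε j : ℂ) / 2) * τ j k * ((N k : ℂ) + (ε k : ℂ) / 2)) +
      2 * ↑Real.pi * I *
        (∑ j, ((N j : ℂ) + (ε j : ℂ) / 2) * (z j + (δ j : ℂ) / 2)))

/-- Membership in the Siegel upper half-space. -/
def SiegelUpper (g : ℕ) (τ : Matrix (Fin g) (Fin g) ℂ) : Prop :=
  τ.IsSymm ∧ (Matrix.of fun j k => (τ j k).im : Matrix (Fin g) (Fin g) ℝ).PosDef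

open Finset in
theorem summable_pi_prod_of_nonneg {ι κ : Type*} [Fintype ι] {f : ι → κ → ℝ}
    (hf₀ : ∀ i k, 0 ≤ f i k) (hf : ∀ i, Summable (f i)) :
    Summable fun x : ι → κ => ∏ i, f i (x i) := by
  classical
  refine summable_of_sum_le (c := ∏ i, ∑' k, f i k)
    (fun x => prod_nonneg fun i _ => hf₀ i (x i)) fun s => ?_
  calc ∑ x ∈ s, ∏ i, f i (x i)
      ≤ ∑ x ∈ Fintype.piFinset fun i => s.image (· i), ∏ i, f i (x i) :=
        sum_le_sum_of_subset_of_nonneg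
          (fun x hx => Fintype.mem_piFinset.2 fun i => mem_image_of_mem _ hx)
          fun x _ _ => prod_nonneg fun i _ => hf₀ i (x i)
    _ = ∏ i, ∑ k ∈ s.image (· i), f i k := (prod_univ_sum _ _).symm
    _ ≤ ∏ i, ∑' k, f i k :=
        prod_le_prod (fun i _ => sum_nonneg fun k _ => hf₀ i k)
          fun i _ => (hf i).sum_le_tsum _ fun k _ => hf₀ i k

open Real in
theorem summable_exp_neg_mul_sq_add_mul (a b s : ℝ) (ha : 0 < a) :
    Summable fun m : ℤ => rexp (-a * (m + s) ^ 2 + b * (m + s)) := by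
  refine ((summable_pow_mul_jacobiTheta₂_term_bound ((2 * a * |s| + |b|) / (2 * π))
    (div_pos ha pi_pos) 0).mul_left (rexp (|b| * |s|))).of_nonneg_of_le
    (fun m => (exp_pos _).le) fun m => ?_
  rw [pow_zero, one_mul, ← Real.exp_add, exp_le_exp, Int.cast_abs]
  have hbound : -π * (a / π * (m : ℝ) ^ 2 - 2 * ((2 * a * |s| + |b|) / (2 * π)) * |(m : ℝ)|)
      = -a * m ^ 2 + (2 * a * |s| + |b|) * |(m : ℝ)| := by
    field_simp
    ring
  have hms : -(2 * a * m * s) ≤ 2 * a * |s| * |(m : ℝ)| := by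
    have := neg_abs_le (m * s : ℝ)
    rw [abs_mul] at this
    nlinarith
  have hlin : b * (m + s) ≤ |b| * |(m : ℝ)| + |b| * |s| :=
    calc b * (m + s) ≤ |b| * |m + s| := by rw [← abs_mul]; exact le_abs_self _
      _ ≤ |b| * (|(m : ℝ)| + |s|) := by gcongr; exact abs_add_le _ _
      _ = _ := by ring
  rw [hbound]
  nlinarith [sq_nonneg s]

open MatrixOrder in
theorem Matrix.PosDef.exists_pos_mul_dotProduct_self_le {ι : Type*} [Fintype ι] [DecidableEq ι]
    {A : Matrix ι ι ℝ} (hA : A.PosDef) :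
    ∃ c > 0, ∀ v : ι → ℝ, c * (v ⬝ᵥ v) ≤ v ⬝ᵥ A *ᵥ v := by
  cases isEmpty_or_nonempty ι
  · exact ⟨1, one_pos, fun v => by simp [dotProduct]⟩
  obtain ⟨c, hc, hcA⟩ := (CFC.exists_pos_algebraMap_le_iff hA.isHermitian.isSelfAdjoint).2
    fun x hx => hA.isStrictlyPositive.spectrum_pos hx
  refine ⟨c, hc, fun v => ?_⟩
  simpa [Algebra.algebraMap_eq_smul_one, sub_mulVec, smul_mulVec, dotProduct_sub] using
    (Matrix.le_iff.1 hcA).dotProduct_mulVec_nonneg v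

theorem Summable.hasSum_tsum_fin_cons {E α : Type*} [NormedAddCommGroup E] [CompleteSpace E]
    {n : ℕ} {f : (Fin (n + 1) → α) → E} (hf : Summable f) :
    HasSum (fun a => ∑' x : Fin n → α, f (Fin.cons a x)) (∑' y, f y) := by
  have hf' : Summable (f ∘ Fin.consEquiv fun _ => α) := (Equiv.summable_iff _).2 hf
  rw [← (Fin.consEquiv _).tsum_eq]
  exact hf'.hasSum.prod_fiberwise fun a => (hf'.prod_factor a).hasSum

noncomputable def thetaTerm (g : ℕ) (ε δ : Fin g → ℤ) (τ : Matrix (Fin g) (Fin g) ℂ)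
    (z : Fin g → ℂ) (N : Fin g → ℤ) : ℂ :=
  cexp (↑Real.pi * I *
      (∑ j, ∑ k, ((N j : ℂ) + (ε j : ℂ) / 2) * τ j k * ((N k : ℂ) + (ε k : ℂ) / 2)) +
    2 * ↑Real.pi * I * (∑ j, ((N j : ℂ) + (ε j : ℂ) / 2) * (z j + (δ j : ℂ) / 2)))

theorem theta_eq_tsum_thetaTerm (g : ℕ) (ε δ : Fin g → ℤ) (τ : Matrix (Fin g) (Fin g) ℂ)
    (z : Fin g → ℂ) : theta g ε δ τ z = ∑' N, thetaTerm g ε δ τ z N := rfl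

open Real in
theorem norm_thetaTerm_le {g : ℕ} (ε δ : Fin g → ℤ) {τ : Matrix (Fin g) (Fin g) ℂ}
    (z : Fin g → ℂ) {c : ℝ}
    (hc : ∀ v, c * (v ⬝ᵥ v) ≤ v ⬝ᵥ (of fun j k => (τ j k).im) *ᵥ v) (N : Fin g → ℤ) :
    ‖thetaTerm g ε δ τ z N‖ ≤
      ∏ j, rexp (-(π * c) * (N j + ε j / 2 : ℝ) ^ 2 + -2 * π * (z j).im * (N j + ε j / 2 : ℝ)) := by
  set v : Fin g → ℝ := fun j => N j + ε j / 2
  have hv : ∀ j, ((N j : ℂ) + (ε j : ℂ) / 2) = (v j : ℂ) := fun j => by simp [v]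
  have hδ : ∀ j, ((δ j : ℂ) / 2) = ((δ j / 2 : ℝ) : ℂ) := fun j => by push_cast; ring
  have hnorm : ‖thetaTerm g ε δ τ z N‖ =
      rexp (-π * (v ⬝ᵥ (of fun j k => (τ j k).im) *ᵥ v) - 2 * π * (v ⬝ᵥ fun j => (z j).im)) := by
    rw [thetaTerm, norm_exp]
    simp only [hv, hδ, add_re, mul_re, mul_im, re_sum, ofReal_re, ofReal_im, I_re, I_im,
      add_im, re_ofNat, im_ofNat, dotProduct, mulVec, of_apply, Finset.mul_sum]
    congr 1
    simp [mul_assoc, sub_eq_add_neg]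
  have hsum : ∑ j, (-(π * c) * v j ^ 2 + -2 * π * (z j).im * v j) =
      -π * (c * (v ⬝ᵥ v)) - 2 * π * (v ⬝ᵥ fun j => (z j).im) := by
    simp only [dotProduct, Finset.mul_sum, ← Finset.sum_sub_distrib]
    exact Finset.sum_congr rfl fun j _ => by ring
  rw [hnorm, ← Real.exp_sum, exp_le_exp]
  change _ ≤ ∑ j, (-(π * c) * v j ^ 2 + -2 * π * (z j).im * v j)
  rw [hsum]
  nlinarith [hc v, pi_pos]

open Real in
theorem summable_thetaTerm {g : ℕ} (ε δ : Fin g → ℤ) {τ : Matrix (Fin g) (Fin g) ℂ}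
    (hτ : (of fun j k => (τ j k).im : Matrix (Fin g) (Fin g) ℝ).PosDef) (z : Fin g → ℂ) :
    Summable (thetaTerm g ε δ τ z) := by
  obtain ⟨c, hc, hcτ⟩ := hτ.exists_pos_mul_dotProduct_self_le
  exact Summable.of_norm_bounded
    (summable_pi_prod_of_nonneg (fun j m => (exp_pos _).le)
      fun j => summable_exp_neg_mul_sq_add_mul (π * c) _ _ (by positivity))
    (norm_thetaTerm_le ε δ z hcτ)

theorem thetaTerm_fin_cons {n : ℕ} (ε δ : Fin n → ℤ) (δ₁ : ℤ)
    {τ : Matrix (Fin (n + 1)) (Fin (n + 1)) ℂ} (hτ : τ.IsSymm) (x : ℂ) (b : Fin n → ℂ)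
    (m : ℤ) (M : Fin n → ℤ) :
    thetaTerm (n + 1) (Fin.cons 0 ε) (Fin.cons δ₁ δ) τ (Fin.cons x b) (Fin.cons m M) =
      cexp (↑Real.pi * I * (m : ℂ) ^ 2 * τ 0 0 + 2 * ↑Real.pi * I * (m : ℂ) * x) *
        (-1 : ℂ) ^ (m * δ₁) *
        thetaTerm n ε δ (of fun j k => τ j.succ k.succ) (fun j => b j + (m : ℂ) * τ j.succ 0) M := by
  have hsign : (-1 : ℂ) ^ (m * δ₁) = cexp (↑Real.pi * I * ((m : ℂ) * δ₁)) := by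
    rw [← exp_pi_mul_I, ← exp_int_mul]
    push_cast
    ring_nf
  have hsymm : ∀ k : Fin n, τ 0 k.succ = τ k.succ 0 := fun k => hτ.apply k.succ 0
  rw [hsign, thetaTerm, thetaTerm, ← Complex.exp_add, ← Complex.exp_add]
  congr 1
  simp only [Fin.sum_univ_succ, Fin.cons_zero, Fin.cons_succ, of_apply, hsymm, Int.cast_zero,
    zero_div, add_zero]
  have hcross : ∑ k : Fin n, (m : ℂ) * τ k.succ 0 * ((M k : ℂ) + ε k / 2) =
      ∑ k : Fin n, ((M k : ℂ) + ε k / 2) * τ k.succ 0 * m :=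
    Finset.sum_congr rfl fun k _ => by ring
  have hshift : ∑ j : Fin n, ((M j : ℂ) + ε j / 2) * (b j + m * τ j.succ 0 + δ j / 2) =
      ∑ j : Fin n, ((M j : ℂ) + ε j / 2) * (b j + δ j / 2) +
        ∑ j : Fin n, ((M j : ℂ) + ε j / 2) * τ j.succ 0 * m := by
    rw [← Finset.sum_add_distrib]
    exact Finset.sum_congr rfl fun j _ => by ring
  rw [Finset.sum_add_distrib, hcross, hshift]
  ring

theorem stmt_2 (n : ℕ) (τ : Matrix (Fin (n + 1)) (Fin (n + 1)) ℂ)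
    (hτ : SiegelUpper (n + 1) τ)
    (x : ℂ) (b : Fin n → ℂ) (δ₁ : ℤ)
    (ε δ : Fin n → ℤ) :
    Summable (fun N : ℤ =>
      Complex.exp (↑Real.pi * I * (N : ℂ)^2 * τ 0 0 + 2 * ↑Real.pi * I * (N : ℂ) * x) *
        (-1 : ℂ) ^ (N * δ₁) *
        theta n ε δ (Matrix.of fun j k => τ j.succ k.succ)
          (fun j => b j + (N : ℂ) * τ j.succ 0)) ∧
    theta (n + 1) (Fin.cons 0 ε) (Fin.cons δ₁ δ) τ (Fin.cons x b) =
      ∑' N : ℤ,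
        Complex.exp (↑Real.pi * I * (N : ℂ)^2 * τ 0 0 + 2 * ↑Real.pi * I * (N : ℂ) * x) *
          (-1 : ℂ) ^ (N * δ₁) *
          theta n ε δ (Matrix.of fun j k => τ j.succ k.succ)
            (fun j => b j + (N : ℂ) * τ j.succ 0) := by
  have h :=
    (summable_thetaTerm (Fin.cons 0 ε) (Fin.cons δ₁ δ) hτ.2 (Fin.cons x b)).hasSum_tsum_fin_cons
  simp only [thetaTerm_fin_cons ε δ δ₁ hτ.1, tsum_mul_left, ← theta_eq_tsum_thetaTerm] at h
  exact ⟨h.summable, h.tsum_eq.symm⟩
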